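/- arXiv:1301.3996 — 2 statements merged into one kernel-verified Lean document; each statement's English description precedes it below -/
import Mathlib

section
/- In an execution where all nodes are correct, the total number of messages sent by the protocol on a graph with |G| nodes and maximum degree d is at most |G|·(1 + d + d² + ⋯ + dⁿ), i.e., O(dⁿ·|G|). -/
/-!
Sort the messages by the length `k` of their relay chain. A message with empty chain is
determined by its sender, and a message with chain of length `k + 1` arises from one with
chain of length `k` by relaying to one of at most `d` neighbours of its sender, so there are
at most `|G| · dᵏ` messages with chain length `k`.
-/

open SimpleGraph

namespace ByzBroadcast

variable {V : Type*} {M : Type*}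

/-- The interior vertices of a walk (all vertices except the two endpoints). -/
def interior {G : SimpleGraph V} {u v : V} (p : G.Walk u v) : List V :=
  p.support.tail.dropLast

/-- `H = max_i H_i`. -/
def Hmax (n : ℕ) (Hv : Fin n → ℕ) : ℕ := Finset.univ.sup Hv

/-- `Critical(u)`: there exist `n` distinct Byzantine nodes and `n` pairwise
disjoint paths of lengths at most `H_1, …, H_n` connecting `u` to them. -/
def Critical (G : SimpleGraph V) (correct : V → Prop) (n : ℕ) (Hv : Fin n → ℕ)
    (u : V) : Prop :=
  ∃ b : Fin n → V, Function.Injective b ∧ (∀ i, ¬ correct (b i)) ∧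
    ∃ X : (i : Fin n) → G.Walk u (b i),
      (∀ i, (X i).IsPath ∧ (X i).length ≤ Hv i) ∧
      ∀ i j, i ≠ j → List.Disjoint (interior (X i)) (interior (X j))

/-- `v` admits `n` pairwise disjoint fully-correct paths of lengths at most
`H_1, …, H_n` to `n` distinct nodes of `R`. -/
def Extends (G : SimpleGraph V) (correct : V → Prop) (n : ℕ) (Hv : Fin n → ℕ)
    (R : Set V) (v : V) : Prop :=
  ∃ r : Fin n → V, Function.Injective r ∧ (∀ i, r i ∈ R) ∧
    ∃ X : (i : Fin n) → G.Walk v (r i),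
      (∀ i, (X i).IsPath ∧ (X i).length ≤ Hv i ∧
        ∀ x ∈ (X i).support, correct x) ∧
      ∀ i j, i ≠ j → List.Disjoint (interior (X i)) (interior (X j))

variable [DecidableEq V]

/-- An asynchronous execution of the broadcast protocol with parameters
`(H_1, …, H_n)`.  `sent v m' S t` means node `v` multicasts the message
`(m', S)` at time `t`; `recd v m' S t` means `(m', S)` belongs to the `Rec`
set of `v` at time `t`; `delivers v m' t` means `v` delivers information `m'`
at time `t`.  The fields are exactly the rules of the protocol (for correct
nodes; Byzantine nodes are unconstrained) together with fair asynchronous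
scheduling (every sent message is eventually processed by each correct
neighbor). -/
structure Exec (G : SimpleGraph V) (correct : V → Prop)
    (source : V) (m : M) (n : ℕ) (Hv : Fin n → ℕ) where
  sent : V → M → Finset V → ℕ → Prop
  recd : V → M → Finset V → ℕ → Prop
  delivers : V → M → ℕ → Prop
  /-- Initially, the source multicasts `(m, ∅)`. -/
  src_sent : sent source m ∅ 0
  /-- The correct source only ever multicasts `(m, ∅)` (oral model). -/
  src_only : ∀ m' S t, sent source m' S t → m' = m ∧ S = ∅
  /-- A correct node receiving a message directly from the source delivers
  it and multicasts `(m', ∅)`. -/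
  recv_src : ∀ v m' S t, G.Adj source v → correct v → sent source m' S t →
      ∃ t', delivers v m' t' ∧ sent v m' ∅ t'
  /-- A correct node receiving `(m', S)` from a neighbor `q ∉ S` with
  `card S < H` records and multicasts `(m', S ∪ {q})`. -/
  recv_fwd : ∀ q v m' S t, G.Adj q v → correct v → sent q m' S t →
      q ∉ S → S.card < Hmax n Hv →
      ∃ t', t < t' ∧ recd v m' (insert q S) t' ∧ sent v m' (insert q S) t'
  /-- Delivery condition (sufficiency): `n` recorded sets of cardinalities at
  most `H_1, …, H_n`, pairwise disjoint. -/
  deliver_suf : ∀ v m' (S : Fin n → Finset V), correct v →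
      (∀ i, (∃ t, recd v m' (S i) t) ∧ (S i).card ≤ Hv i) →
      (∀ i j, i ≠ j → Disjoint (S i) (S j)) →
      ∃ t', delivers v m' t' ∧ sent v m' ∅ t'
  /-- A correct node only sends messages according to the protocol. -/
  sent_inv : ∀ v m' S t, correct v → v ≠ source → sent v m' S t →
      (S = ∅ ∧ delivers v m' t) ∨
      (∃ q ∈ S, G.Adj v q ∧ ∃ t', t' < t ∧ sent q m' (S.erase q) t')
  /-- A recorded message was received from a neighbor belonging to its set. -/
  recd_inv : ∀ v m' S t, correct v → recd v m' S t →
      S.card ≤ Hmax n Hv ∧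
      ∃ q ∈ S, G.Adj v q ∧ ∃ t', t' < t ∧ sent q m' (S.erase q) t'
  /-- A correct node only delivers upon a direct source message or upon the
  `n`-disjoint-sets condition. -/
  deliver_inv : ∀ v m' t, correct v → delivers v m' t →
      m' = m ∨
      ∃ S : Fin n → Finset V,
        (∀ i, (∃ t' ≤ t, recd v m' (S i) t') ∧ (S i).card ≤ Hv i) ∧
        (∀ i j, i ≠ j → Disjoint (S i) (S j))

/-- A reliable node set: a set of nodes that deliver the good information `m`
in every possible execution. -/
def Reliable (G : SimpleGraph V) (correct : V → Prop) (source : V) (m : M)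
    (n : ℕ) (Hv : Fin n → ℕ) (R : Set V) : Prop :=
  ∀ E : Exec G correct source m n Hv, ∀ r ∈ R, ∃ t, E.delivers r m t

section MessageCount

def IsRelayClosed (G : SimpleGraph V) (s : Finset (V × Finset V)) : Prop :=
  ∀ p ∈ s, p.2 = ∅ ∨ ∃ q ∈ p.2, G.Adj p.1 q ∧ (q, p.2.erase q) ∈ s

def chainLayer (s : Finset (V × Finset V)) (k : ℕ) : Finset (V × Finset V) :=
  s.filter fun p => p.2.card = k

omit [DecidableEq V] in
theorem card_eq_sum_card_chainLayer {s : Finset (V × Finset V)} {n : ℕ}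
    (hlen : ∀ p ∈ s, p.2.card ≤ n) :
    s.card = ∑ k ∈ Finset.range (n + 1), (chainLayer s k).card :=
  Finset.card_eq_sum_card_fiberwise fun p hp => Finset.mem_range_succ_iff.2 (hlen p hp)

omit [DecidableEq V] in
theorem card_chainLayer_zero_le [Fintype V] (s : Finset (V × Finset V)) :
    (chainLayer s 0).card ≤ Fintype.card V := by
  refine Finset.card_le_card_of_injOn Prod.fst (fun _ _ => Finset.mem_univ _) ?_
  intro p hp q hq hpq
  simp only [chainLayer, Finset.coe_filter, Finset.card_eq_zero] at hp hq
  exact Prod.ext hpq (hp.2.trans hq.2.symm)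

def relays (G : SimpleGraph V) [G.LocallyFinite] (p : V × Finset V) : Finset (V × Finset V) :=
  (G.neighborFinset p.1).image fun v => (v, insert p.1 p.2)

variable {G : SimpleGraph V} [G.LocallyFinite]

theorem card_relays_le (p : V × Finset V) : (relays G p).card ≤ G.degree p.1 :=
  (Finset.card_image_le).trans_eq (G.card_neighborFinset_eq_degree p.1)

theorem chainLayer_succ_subset {s : Finset (V × Finset V)} (hs : IsRelayClosed G s) (k : ℕ) :
    chainLayer s (k + 1) ⊆ (chainLayer s k).biUnion (relays G) := by
  intro p hp
  obtain ⟨hps, hcard⟩ := Finset.mem_filter.1 hp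
  rcases hs p hps with hempty | ⟨q, hq, hadj, hqs⟩
  · simp [hempty] at hcard
  · refine Finset.mem_biUnion.2 ⟨(q, p.2.erase q), ?_, ?_⟩
    · rw [chainLayer, Finset.mem_filter, Finset.card_erase_of_mem hq, hcard]
      exact ⟨hqs, rfl⟩
    · exact Finset.mem_image.2 ⟨p.1, (G.mem_neighborFinset _ _).2 hadj.symm,
        by rw [Finset.insert_erase hq]⟩

theorem card_chainLayer_succ_le {s : Finset (V × Finset V)} (hs : IsRelayClosed G s)
    {d : ℕ} (hd : ∀ v, G.degree v ≤ d) (k : ℕ) :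
    (chainLayer s (k + 1)).card ≤ (chainLayer s k).card * d :=
  calc (chainLayer s (k + 1)).card
      ≤ ((chainLayer s k).biUnion (relays G)).card :=
        Finset.card_le_card (chainLayer_succ_subset hs k)
    _ ≤ ∑ p ∈ chainLayer s k, (relays G p).card := Finset.card_biUnion_le
    _ ≤ ∑ _p ∈ chainLayer s k, d :=
        Finset.sum_le_sum fun p _ => (card_relays_le p).trans (hd p.1)
    _ = (chainLayer s k).card * d := by rw [Finset.sum_const, smul_eq_mul]

theorem card_chainLayer_le [Fintype V] {s : Finset (V × Finset V)} (hs : IsRelayClosed G s)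
    {d : ℕ} (hd : ∀ v, G.degree v ≤ d) (k : ℕ) :
    (chainLayer s k).card ≤ Fintype.card V * d ^ k := by
  induction k with
  | zero => simpa using card_chainLayer_zero_le s
  | succ k ih =>
    calc (chainLayer s (k + 1)).card ≤ (chainLayer s k).card * d :=
          card_chainLayer_succ_le hs hd k
      _ ≤ Fintype.card V * d ^ k * d := Nat.mul_le_mul_right d ih
      _ = Fintype.card V * d ^ (k + 1) := by ring

end MessageCount

/-- **Message complexity.** When all nodes are correct, the messages sent by
the protocol are pairs `(v, S)` where `S` is the chain of previous relays:
either `S = ∅`, or the message extends a message `(q, S \ {q})` sent by a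
neighbor `q ∈ S`; chains have length at most `n`. On a graph of maximum
degree `d` with `|G|` nodes, the total number of such messages is at most
`|G| · (1 + d + d² + ⋯ + dⁿ)`, i.e. `O(dⁿ·|G|)`. -/
theorem message_complexity [Fintype V] (G : SimpleGraph V)
    [DecidableRel G.Adj] (n d : ℕ) (hd : ∀ v : V, G.degree v ≤ d)
    (sends : Finset (V × Finset V))
    (hchain : ∀ p ∈ sends, p.2 = (∅ : Finset V) ∨
      ∃ q ∈ p.2, G.Adj p.1 q ∧ (q, p.2.erase q) ∈ sends)
    (hlen : ∀ p ∈ sends, p.2.card ≤ n) :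
    sends.card ≤ Fintype.card V * ∑ k ∈ Finset.range (n + 1), d ^ k := by
  rw [card_eq_sum_card_chainLayer hlen, Finset.mul_sum]
  exact Finset.sum_le_sum fun k _ => card_chainLayer_le hchain hd k

end ByzBroadcast
end

section
/- For the protocol setting (1, H) (n = 2, H_1 = 1, H_2 = H): if every pair of distinct Byzantine nodes is at graph distance at least H + 2, then for every correct node u the proposition Critical(u) is false, and hence no correct node delivers a false information. -/
open SimpleGraph

namespace ByzBroadcast

variable {V : Type*} {M : Type*}

variable [DecidableEq V]

/-!
A message `(m', S)` sent before the first false delivery by a correct node was relayed hop by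
hop by the members of `S`, so it originates at a Byzantine node within distance `|S|` of its
sender. Hence a critical node, and also the first correct node to deliver a false information,
has two distinct Byzantine nodes at distances at most `1` and `H`; via that node they are at
distance at most `H + 1` from each other.
-/

def ByzantineWithin (G : SimpleGraph V) (correct : V → Prop) (n : ℕ) (Hv : Fin n → ℕ)
    (u : V) : Prop :=
  ∃ b : Fin n → V, Function.Injective b ∧ (∀ i, ¬ correct (b i)) ∧
    ∀ i, G.edist u (b i) ≤ Hv i

omit [DecidableEq V] in
lemma byzantineWithin_of_critical {G : SimpleGraph V} {correct : V → Prop} {n : ℕ}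
    {Hv : Fin n → ℕ} {u : V} (h : Critical G correct n Hv u) :
    ByzantineWithin G correct n Hv u := by
  obtain ⟨b, hinj, hbyz, X, hX, -⟩ := h
  exact ⟨b, hinj, hbyz, fun i => (G.edist_le (X i)).trans (by exact_mod_cast (hX i).2)⟩

omit [DecidableEq V] in
lemma edist_le_add_one_of_adj {G : SimpleGraph V} {u v w : V} {k : ℕ} (huv : G.Adj u v)
    (hvw : G.edist v w ≤ k) : G.edist u w ≤ (k + 1 : ℕ) :=
  calc G.edist u w ≤ G.edist u v + G.edist v w := G.edist_triangle
    _ ≤ 1 + k := add_le_add (edist_eq_one_iff_adj.mpr huv).le hvw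
    _ = (k + 1 : ℕ) := by push_cast; exact add_comm _ _

section Exec

variable {G : SimpleGraph V} {correct : V → Prop} {source : V} {m m' : M} {n : ℕ}
  {Hv : Fin n → ℕ} (E : Exec G correct source m n Hv)

lemma exists_byzantine_of_sent (hm : m' ≠ m) {T : ℕ}
    (hT : ∀ t < T, ∀ w, correct w → ¬ E.delivers w m' t) {S : Finset V} :
    ∀ {q t}, t < T → E.sent q m' S t →
      ∃ b, ¬ correct b ∧ b ∈ insert q S ∧ G.edist q b ≤ S.card := by
  induction S using Finset.strongInduction with
  | H S ih =>
  intro q t ht hsent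
  by_cases hq : correct q
  swap
  · exact ⟨q, hq, Finset.mem_insert_self q S, by simp⟩
  by_cases hqs : q = source
  · subst hqs
    exact absurd (E.src_only m' S t hsent).1 hm
  rcases E.sent_inv q m' S t hq hqs hsent with ⟨-, hd⟩ | ⟨q', hq', hadj, t', ht', hsent'⟩
  · exact absurd hd (hT t ht q hq)
  obtain ⟨b, hb, hbS, hdist⟩ := ih _ (Finset.erase_ssubset hq') (ht'.trans ht) hsent'
  rw [Finset.insert_erase hq'] at hbS
  refine ⟨b, hb, Finset.mem_insert_of_mem hbS, ?_⟩
  rw [← Finset.card_erase_add_one hq']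
  exact edist_le_add_one_of_adj hadj hdist

lemma exists_byzantine_of_recd (hm : m' ≠ m) {T : ℕ}
    (hT : ∀ t < T, ∀ w, correct w → ¬ E.delivers w m' t) {v : V} {S : Finset V} {t : ℕ}
    (hv : correct v) (ht : t ≤ T) (hrecd : E.recd v m' S t) :
    ∃ b, ¬ correct b ∧ b ∈ S ∧ G.edist v b ≤ S.card := by
  obtain ⟨-, q, hq, hadj, t', ht', hsent⟩ := E.recd_inv v m' S t hv hrecd
  obtain ⟨b, hb, hbS, hdist⟩ :=
    exists_byzantine_of_sent E hm hT (ht'.trans_le ht) hsent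
  rw [Finset.insert_erase hq] at hbS
  refine ⟨b, hb, hbS, ?_⟩
  rw [← Finset.card_erase_add_one hq]
  exact edist_le_add_one_of_adj hadj hdist

lemma byzantineWithin_of_first_false_delivery (hm : m' ≠ m) {t : ℕ} {v : V}
    (hT : ∀ t' < t, ∀ w, correct w → ¬ E.delivers w m' t') (hv : correct v)
    (hd : E.delivers v m' t) : ByzantineWithin G correct n Hv v := by
  obtain h | ⟨S, hS, hdisj⟩ := E.deliver_inv v m' t hv hd
  · exact absurd h hm
  have hbyz : ∀ i, ∃ b, ¬ correct b ∧ b ∈ S i ∧ G.edist v b ≤ Hv i := fun i => by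
    obtain ⟨⟨t', ht', hrecd⟩, hcard⟩ := hS i
    obtain ⟨b, hb, hbS, hdist⟩ := exists_byzantine_of_recd E hm hT hv ht' hrecd
    exact ⟨b, hb, hbS, hdist.trans (by exact_mod_cast hcard)⟩
  choose b hb hbS hdist using hbyz
  refine ⟨b, fun i j hij => ?_, hb, hdist⟩
  by_contra hne
  exact Finset.disjoint_left.mp (hdisj i j hne) (hbS i) (hij ▸ hbS j)

lemma exists_byzantineWithin_of_false_delivery (hm : m' ≠ m) {t : ℕ} {v : V}
    (hv : correct v) (hd : E.delivers v m' t) :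
    ∃ w, correct w ∧ ByzantineWithin G correct n Hv w := by
  classical
  have hex : ∃ t, ∃ w, correct w ∧ E.delivers w m' t := ⟨t, v, hv, hd⟩
  obtain ⟨w, hw, hdw⟩ := Nat.find_spec hex
  refine ⟨w, hw, byzantineWithin_of_first_false_delivery E hm (fun t' ht' w hw hd => ?_) hw hdw⟩
  exact Nat.find_min hex ht' ⟨w, hw, hd⟩

end Exec

omit [DecidableEq V] in
lemma not_byzantineWithin_of_spacing {G : SimpleGraph V} {correct : V → Prop} {H : ℕ}
    (hspace : ∀ b₁ b₂ : V, ¬ correct b₁ → ¬ correct b₂ → b₁ ≠ b₂ →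
      (H + 2 : ℕ∞) ≤ G.edist b₁ b₂) (u : V) :
    ¬ ByzantineWithin G correct 2 ![1, H] u := by
  rintro ⟨b, hinj, hbyz, hdist⟩
  have hne : b 0 ≠ b 1 := hinj.ne (by decide)
  have hclose : G.edist (b 0) (b 1) ≤ 1 + H :=
    calc G.edist (b 0) (b 1) ≤ G.edist (b 0) u + G.edist u (b 1) := G.edist_triangle
      _ ≤ 1 + H := by
        rw [G.edist_comm]
        exact add_le_add (by simpa using hdist 0) (by simpa using hdist 1)
  have hfar : ((H + 2 : ℕ) : ℕ∞) ≤ ((1 + H : ℕ) : ℕ∞) := by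
    exact_mod_cast (hspace _ _ (hbyz 0) (hbyz 1) hne).trans hclose
  exact absurd (Nat.cast_le.mp hfar) (by omega)

theorem spacing_safety_general (G : SimpleGraph V) (correct : V → Prop) (source : V)
    (m : M) (H : ℕ)
    (hspace : ∀ b₁ b₂ : V, ¬ correct b₁ → ¬ correct b₂ → b₁ ≠ b₂ →
      (H + 2 : ℕ∞) ≤ G.edist b₁ b₂) :
    (∀ u, correct u → ¬ Critical G correct 2 ![1, H] u) ∧
    ∀ E : Exec G correct source m 2 ![1, H], ∀ v m' t, correct v →
      E.delivers v m' t → m' = m := by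
  refine ⟨fun u _ hcrit => not_byzantineWithin_of_spacing hspace u
    (byzantineWithin_of_critical hcrit), fun E v m' t hv hd => ?_⟩
  by_contra hm
  obtain ⟨w, -, hw⟩ := exists_byzantineWithin_of_false_delivery E hm hv hd
  exact not_byzantineWithin_of_spacing hspace w hw

/-- For the protocol setting `(1, H)`: if every pair of distinct Byzantine
nodes is at graph distance at least `H + 2`, then `Critical(u)` is false for
every correct node `u`, and hence no correct node delivers a false
information. -/
theorem spacing_safety (G : SimpleGraph V) (correct : V → Prop) (source : V)
    (m : M) (H : ℕ) (hsrc : correct source)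
    (hspace : ∀ b₁ b₂ : V, ¬ correct b₁ → ¬ correct b₂ → b₁ ≠ b₂ →
      (H + 2 : ℕ∞) ≤ G.edist b₁ b₂) :
    (∀ u, correct u → ¬ Critical G correct 2 ![1, H] u) ∧
    ∀ E : Exec G correct source m 2 ![1, H], ∀ v m' t, correct v →
      E.delivers v m' t → m' = m :=
  spacing_safety_general G correct source m H hspace

end ByzBroadcast
end
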